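/- Consider the n × n gridworld with positions in Fin n × Fin n (n ≥ 1) and the four clipped movement actions: Right maps (x, y) to (min (x+1) (n−1), y), Left maps (x, y) to (x − 1 clipped at 0, y), Up maps (x, y) to (x, min (y+1) (n−1)), and Down maps (x, y) to (x, y − 1 clipped at 0). For any two positions p and q, the minimal length of a sequence of actions whose successive application takes p to q equals the Manhattan distance |p.1 − q.1| + |p.2 − q.2| (computed as the sum of the absolute differences of coordinates, using truncated-subtraction symmetric differences on naturals). -/
import Mathlib


/-- The four cardinal movement actions of the gridworld. -/
inductive GridAct : Type
  | right | left | up | down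
  deriving DecidableEq

/-- Clipped movement dynamics on the `n × n` grid: moving off the edge of the
grid leaves the position unchanged. -/
def gridStep {n : ℕ} : GridAct → Fin n × Fin n → Fin n × Fin n
  | .right, (x, y) => (⟨min (x.val + 1) (n - 1), by have := x.isLt; omega⟩, y)
  | .left,  (x, y) => (⟨x.val - 1, by have := x.isLt; omega⟩, y)
  | .up,    (x, y) => (x, ⟨min (y.val + 1) (n - 1), by have := y.isLt; omega⟩)
  | .down,  (x, y) => (x, ⟨y.val - 1, by have := y.isLt; omega⟩)

/-- Apply a sequence of actions from a starting position. -/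
def gridRun {n : ℕ} (as : List GridAct) (p : Fin n × Fin n) : Fin n × Fin n :=
  as.foldl (fun c a => gridStep a c) p

/-- Manhattan distance on the grid, with absolute coordinate differences
computed via truncated subtraction on `ℕ`. -/
def manhattan {n : ℕ} (p q : Fin n × Fin n) : ℕ :=
  ((p.1.val - q.1.val) + (q.1.val - p.1.val)) + ((p.2.val - q.2.val) + (q.2.val - p.2.val))

lemma gridRun_cons {n : ℕ} (a : GridAct) (as : List GridAct) (p : Fin n × Fin n) :
    gridRun (a :: as) p = gridRun as (gridStep a p) := rfl

lemma gridRun_append {n : ℕ} (as bs : List GridAct) (p : Fin n × Fin n) :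
    gridRun (as ++ bs) p = gridRun bs (gridRun as p) := by
  simp [gridRun, List.foldl_append]

lemma run_right {n : ℕ} (k : ℕ) (x y : Fin n) (h : x.val + k < n) :
    gridRun (List.replicate k .right) (x, y) = (⟨x.val + k, h⟩, y) := by
  induction k generalizing x with
  | zero => simp [gridRun]
  | succ k ih =>
      rw [List.replicate_succ, gridRun_cons]
      have hx : gridStep GridAct.right (x, y)
          = ((⟨x.val + 1, by omega⟩ : Fin n), y) := by
        simp only [gridStep]
        congr 1
        ext
        simp; omega
      rw [hx, ih ⟨x.val + 1, by omega⟩ (by simp; omega)]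
      congr 1
      ext
      simp; omega

lemma run_left {n : ℕ} (k : ℕ) (x y : Fin n) (h : k ≤ x.val) :
    gridRun (List.replicate k .left) (x, y)
      = (⟨x.val - k, by have := x.isLt; omega⟩, y) := by
  induction k generalizing x with
  | zero => simp [gridRun]
  | succ k ih =>
      rw [List.replicate_succ, gridRun_cons]
      have hx : gridStep GridAct.left (x, y)
          = ((⟨x.val - 1, by have := x.isLt; omega⟩ : Fin n), y) := rfl
      rw [hx, ih ⟨x.val - 1, by have := x.isLt; omega⟩ (by simp; omega)]
      congr 1
      ext
      simp; omega

lemma run_up {n : ℕ} (k : ℕ) (x y : Fin n) (h : y.val + k < n) :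
    gridRun (List.replicate k .up) (x, y) = (x, ⟨y.val + k, h⟩) := by
  induction k generalizing y with
  | zero => simp [gridRun]
  | succ k ih =>
      rw [List.replicate_succ, gridRun_cons]
      have hx : gridStep GridAct.up (x, y)
          = (x, (⟨y.val + 1, by omega⟩ : Fin n)) := by
        simp only [gridStep]
        congr 1
        ext
        simp; omega
      rw [hx, ih ⟨y.val + 1, by omega⟩ (by simp; omega)]
      congr 1
      ext
      simp; omega

lemma run_down {n : ℕ} (k : ℕ) (x y : Fin n) (h : k ≤ y.val) :
    gridRun (List.replicate k .down) (x, y)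
      = (x, ⟨y.val - k, by have := y.isLt; omega⟩) := by
  induction k generalizing y with
  | zero => simp [gridRun]
  | succ k ih =>
      rw [List.replicate_succ, gridRun_cons]
      have hx : gridStep GridAct.down (x, y)
          = (x, (⟨y.val - 1, by have := y.isLt; omega⟩ : Fin n)) := rfl
      rw [hx, ih ⟨y.val - 1, by have := y.isLt; omega⟩ (by simp; omega)]
      congr 1
      ext
      simp; omega

lemma manhattan_step_le {n : ℕ} (a : GridAct) (p q : Fin n × Fin n) :
    manhattan p q ≤ manhattan (gridStep a p) q + 1 := by
  obtain ⟨x, y⟩ := p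
  have hq1 := q.1.isLt
  have hq2 := q.2.isLt
  cases a <;> simp [gridStep, manhattan] <;> omega

lemma manhattan_le_length {n : ℕ} (as : List GridAct) (p q : Fin n × Fin n)
    (h : gridRun as p = q) : manhattan p q ≤ as.length := by
  induction as generalizing p with
  | nil =>
      simp [gridRun] at h
      subst h
      simp [manhattan]
  | cons a as ih =>
      rw [gridRun_cons] at h
      have := ih (gridStep a p) h
      have := manhattan_step_le a p q
      simp only [List.length_cons]
      omega

/-- In the `n × n` gridworld with clipped dynamics, the minimal length of an
action sequence taking `p` to `q` is exactly the Manhattan distance from `p` to `q`. -/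
theorem grid_min_steps_eq_manhattan (n : ℕ) (hn : 1 ≤ n) (p q : Fin n × Fin n) :
    IsLeast {L : ℕ | ∃ as : List GridAct, as.length = L ∧ gridRun as p = q}
      (manhattan p q) := by
  constructor
  · -- membership
    obtain ⟨x, y⟩ := p
    obtain ⟨u, v⟩ := q
    have hu := u.isLt
    have hv := v.isLt
    -- horizontal moves
    have hH : ∃ asX : List GridAct,
        asX.length = (x.val - u.val) + (u.val - x.val) ∧
        gridRun asX (x, y) = (u, y) := by
      rcases le_or_gt x.val u.val with hx | hx
      · refine ⟨List.replicate (u.val - x.val) .right, by simp; omega, ?_⟩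
        rw [run_right (u.val - x.val) x y (by omega)]
        congr 1
        ext; simp; omega
      · refine ⟨List.replicate (x.val - u.val) .left, by simp; omega, ?_⟩
        rw [run_left (x.val - u.val) x y (by omega)]
        congr 1
        ext; simp; omega
    have hV : ∃ asY : List GridAct,
        asY.length = (y.val - v.val) + (v.val - y.val) ∧
        gridRun asY (u, y) = (u, v) := by
      rcases le_or_gt y.val v.val with hy | hy
      · refine ⟨List.replicate (v.val - y.val) .up, by simp; omega, ?_⟩
        rw [run_up (v.val - y.val) u y (by omega)]
        congr 1
        ext; simp; omega
      · refine ⟨List.replicate (y.val - v.val) .down, by simp; omega, ?_⟩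
        rw [run_down (y.val - v.val) u y (by omega)]
        congr 1
        ext; simp; omega
    obtain ⟨asX, hlX, hrX⟩ := hH
    obtain ⟨asY, hlY, hrY⟩ := hV
    refine ⟨asX ++ asY, ?_, ?_⟩
    · simp [hlX, hlY, manhattan]
    · rw [gridRun_append, hrX, hrY]
  · intro L hL
    obtain ⟨as, hlen, hrun⟩ := hL
    have := manhattan_le_length as p q hrun
    omega
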